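/- (Abstract form of Proposition 3.3.) Let Γ ⊆ G be a countable discrete subgroup. Let f: G → [0,∞) be measurable and bi-K-invariant with ∫_G f(g) Ξ(g) dμ_G(g) < ∞, and let ξ: X → [0,∞] be measurable with ∫_X ξ dν < ∞. Suppose there exist a relatively compact open neighborhood U of the identity whose translates γU (γ ∈ Γ) are pairwise disjoint, and a constant C > 0, such that for every γ ∈ Γ and every g ∈ γU one has f(γ) ≤ C f(g) and ∫_X c(γ,x)^{1/2} ξ(x) dν(x) ≤ C ∫_X c(g,x)^{1/2} ξ(x) dν(x). Then Σ_{γ∈Γ} f(γ) ∫_X c(γ,x)^{1/2} ξ(x) dν(x) ≤ (C² / μ_G(U)) · (∫_G f Ξ dμ_G) · (∫_X ξ dν). -/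

import Mathlib

open MeasureTheory ENNReal

/-!
Set `h(x) = ∫_G f(g) c(g,x)^{1/2} dμ_G(g)`. Since `ν` is `K`-invariant, the densities satisfy the
cocycle identity `c(kg, x) = c(g, k⁻¹x)`; together with left `K`-invariance of `f` and left
invariance of Haar measure this makes `h` a.e. `K`-invariant, so by ergodicity `h` is a.e. at most
its mean, which by Tonelli is `∫_G f Ξ dμ_G`. Pairing with `ξ` and using Tonelli once more bounds
`∫_G f(g) ∫_X c(g,x)^{1/2} ξ dν dμ_G(g)` by `(∫_G f Ξ)(∫_X ξ)`. Finally, by the stability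
assumptions each term of the sum over `Γ` is at most `C² / μ_G(U)` times the integral of the
same integrand over `γU`, and these translates are disjoint.
-/

open Set Function

theorem Real.sqrt_eq_sqrt_of_ofReal_eq {a b : ℝ} (h : ENNReal.ofReal a = ENNReal.ofReal b) :
    √a = √b := by
  rw [ENNReal.ofReal, ENNReal.ofReal, ENNReal.coe_inj] at h
  simp only [Real.sqrt, h]

theorem ofReal_sqrt_le_one_add_ofReal (a : ℝ) : ENNReal.ofReal √a ≤ 1 + ENNReal.ofReal a := by
  rcases le_total a 0 with ha | ha
  · simp [Real.sqrt_eq_zero'.mpr ha]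
  · rw [← ENNReal.ofReal_one, ← ENNReal.ofReal_add zero_le_one ha]
    exact ENNReal.ofReal_le_ofReal (by nlinarith [Real.sq_sqrt ha, Real.sqrt_nonneg a])

theorem mul_le_sq_mul_mul_of_le_mul {a a' b b' C : ℝ≥0∞} (h : a ≤ C * b) (h' : a' ≤ C * b') :
    a * a' ≤ C ^ 2 * (b * b') :=
  (mul_le_mul' h h').trans_eq (by ring)

theorem lintegral_eq_measure_univ_of_map_eq_withDensity {X : Type*} [MeasurableSpace X]
    {ν : Measure X} {T : X → X} (hT : Measurable T) {ρ : X → ℝ≥0∞}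
    (h : ν.map T = ν.withDensity ρ) : ∫⁻ x, ρ x ∂ν = ν univ := by
  rw [← setLIntegral_univ, ← withDensity_apply _ MeasurableSet.univ, ← h,
    Measure.map_apply hT MeasurableSet.univ, preimage_univ]

theorem integrable_sqrt_of_lintegral_ofReal_ne_top {X : Type*} [MeasurableSpace X]
    {ν : Measure X} [IsFiniteMeasure ν] {ρ : X → ℝ} (hρ : Measurable ρ)
    (hfin : ∫⁻ x, ENNReal.ofReal (ρ x) ∂ν ≠ ⊤) : Integrable (fun x => √(ρ x)) ν := by
  refine ⟨hρ.sqrt.aestronglyMeasurable,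
    (hasFiniteIntegral_iff_ofReal (ae_of_all _ fun _ => Real.sqrt_nonneg _)).mpr ?_⟩
  calc ∫⁻ x, ENNReal.ofReal √(ρ x) ∂ν ≤ ∫⁻ x, 1 + ENNReal.ofReal (ρ x) ∂ν :=
        lintegral_mono fun x => ofReal_sqrt_le_one_add_ofReal (ρ x)
    _ = ν univ + ∫⁻ x, ENNReal.ofReal (ρ x) ∂ν := by
        rw [lintegral_add_left measurable_const, lintegral_const, one_mul]
    _ < ⊤ := ENNReal.add_lt_top.mpr ⟨measure_lt_top ν univ, hfin.lt_top⟩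

theorem ae_le_lintegral_of_measure_superlevel_eq_zero_or_one {α : Type*} [MeasurableSpace α]
    {μ : Measure α} {h : α → ℝ≥0∞} (hh : AEMeasurable h μ)
    (h01 : ∀ t, μ {x | t < h x} = 0 ∨ μ {x | t < h x} = 1) :
    ∀ᵐ x ∂μ, h x ≤ ∫⁻ x, h x ∂μ := by
  have hnull : ∀ t, ∫⁻ x, h x ∂μ < t → μ {x | t < h x} = 0 := fun t ht =>
    (h01 t).resolve_right fun h1 => ht.not_ge <| calc
      t = t * μ {x | t < h x} := by rw [h1, mul_one]
      _ ≤ t * μ {x | t ≤ h x} :=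
          mul_le_mul_right (measure_mono fun x (hx : t < h x) => hx.le) t
      _ ≤ ∫⁻ x, h x ∂μ := mul_meas_ge_le_lintegral₀ hh t
  have hsub : {x | ∫⁻ x, h x ∂μ < h x} ⊆
      ⋃ (q : ℚ) (_ : ∫⁻ x, h x ∂μ < ENNReal.ofReal q), {x | ENNReal.ofReal q < h x} := by
    intro x hx
    obtain ⟨q, -, hmq, hqh⟩ := ENNReal.lt_iff_exists_rat_btwn.mp hx
    exact mem_biUnion hmq hqh
  simpa only [ae_iff, not_le] using
    measure_mono_null hsub (measure_iUnion_null fun q => measure_iUnion_null (hnull _))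

theorem lintegral_mul_lintegral_mul_swap {G X : Type*} [MeasurableSpace G] [MeasurableSpace X]
    {μ : Measure G} {ν : Measure X} [SFinite μ] [SFinite ν] {F : G → ℝ≥0∞} {S : G → X → ℝ≥0∞}
    {ξ : X → ℝ≥0∞} (hF : Measurable F) (hS : Measurable (uncurry S)) (hξ : Measurable ξ) :
    ∫⁻ g, F g * ∫⁻ x, S g x * ξ x ∂ν ∂μ = ∫⁻ x, (∫⁻ g, F g * S g x ∂μ) * ξ x ∂ν := by
  have hS_left : ∀ g, Measurable (S g) := fun g => hS.comp measurable_prodMk_left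
  have hS_right : ∀ x, Measurable (S · x) := fun x => hS.comp measurable_prodMk_right
  calc ∫⁻ g, F g * ∫⁻ x, S g x * ξ x ∂ν ∂μ = ∫⁻ g, ∫⁻ x, F g * S g x * ξ x ∂ν ∂μ := by
        simp_rw [mul_assoc]
        exact lintegral_congr fun g => (lintegral_const_mul _ ((hS_left g).mul hξ)).symm
    _ = ∫⁻ x, ∫⁻ g, F g * S g x * ξ x ∂μ ∂ν :=
        lintegral_lintegral_swap (((hF.comp measurable_fst).mul hS).mul
          (hξ.comp measurable_snd)).aemeasurable
    _ = ∫⁻ x, (∫⁻ g, F g * S g x ∂μ) * ξ x ∂ν :=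
        lintegral_congr fun x => lintegral_mul_const _ (hF.mul (hS_right x))

section QuasiInvariantAction

variable {G X : Type*} [Group G] [MeasurableSpace G] [MeasurableSpace X] [MulAction G X]
  [MeasurableSMul G X] {ν : Measure X}

theorem map_smul_withDensity {k : G} (hk : ν.map (k • ·) = ν) {ρ : X → ℝ≥0∞}
    (hρ : Measurable ρ) : (ν.withDensity ρ).map (k • ·) = ν.withDensity fun x => ρ (k⁻¹ • x) := by
  ext A hA
  rw [Measure.map_apply (measurable_const_smul k) hA,
    withDensity_apply _ (measurable_const_smul k hA), withDensity_apply _ hA]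
  have hρk : Measurable fun x => ρ (k⁻¹ • x) := hρ.comp (measurable_const_smul _)
  conv_rhs => rw [← hk]
  rw [setLIntegral_map hA hρk (measurable_const_smul k)]
  simp only [inv_smul_smul]

theorem density_mul_ae_eq_density_comp_inv_smul [SigmaFinite ν] {ρ : G → X → ℝ≥0∞}
    (hρ : ∀ g, Measurable (ρ g)) (hmap : ∀ g, ν.map (g • ·) = ν.withDensity (ρ g)) {k : G}
    (hk : ν.map (k • ·) = ν) (g : G) : ρ (k * g) =ᵐ[ν] fun x => ρ g (k⁻¹ • x) := by
  have hρk : Measurable fun x => ρ g (k⁻¹ • x) := (hρ g).comp (measurable_const_smul _)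
  rw [← withDensity_eq_iff_of_sigmaFinite (hρ _).aemeasurable hρk.aemeasurable,
    ← hmap, ← map_smul_withDensity hk (hρ g), ← hmap,
    Measure.map_map (measurable_const_smul k) (measurable_const_smul g)]
  congr 1
  funext x
  exact mul_smul k g x

theorem ae_lintegral_comp_inv_smul_eq [MeasurableMul G] (μ : Measure G)
    [μ.IsMulLeftInvariant] [SFinite μ] [SFinite ν] {Φ : G → X → ℝ≥0∞}
    (hΦ : Measurable (uncurry Φ)) {k : G} (hk : ∀ g, ∀ᵐ x ∂ν, Φ (k * g) x = Φ g (k⁻¹ • x)) :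
    ∀ᵐ x ∂ν, ∫⁻ g, Φ g (k⁻¹ • x) ∂μ = ∫⁻ g, Φ g x ∂μ := by
  have hset : MeasurableSet {p : G × X | Φ (k * p.1) p.2 = Φ p.1 (k⁻¹ • p.2)} :=
    measurableSet_eq_fun (hΦ.comp ((measurable_const_mul k).prodMap measurable_id))
      (hΦ.comp (measurable_id.prodMap (measurable_const_smul _)))
  filter_upwards [(Measure.ae_ae_comm hset).mp (ae_of_all μ hk)] with x hx
  rw [← lintegral_congr_ae hx]
  exact lintegral_mul_left_eq_self (Φ · x) k

end QuasiInvariantAction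

theorem measure_superlevel_eq_zero_or_one {G X : Type*} [Group G] [MeasurableSpace X]
    [MulAction G X] {ν : Measure X} (K : Subgroup G)
    (herg : ∀ A : Set X, MeasurableSet A →
      (∀ k ∈ K, ν (symmDiff ((fun x => k • x) '' A) A) = 0) → ν A = 0 ∨ ν A = 1)
    {h : X → ℝ≥0∞} (hh : Measurable h) (hinv : ∀ k ∈ K, ∀ᵐ x ∂ν, h (k⁻¹ • x) = h x)
    (t : ℝ≥0∞) : ν {x | t < h x} = 0 ∨ ν {x | t < h x} = 1 := by
  refine herg _ (measurableSet_lt measurable_const hh) fun k hk => ?_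
  rw [image_smul, ← preimage_smul_inv, measure_symmDiff_eq_zero_iff, Filter.eventuallyEq_set]
  filter_upwards [hinv k hk] with x hx
  simp only [mem_preimage, mem_ofPred_eq, hx]

theorem measure_mul_tsum_le_lintegral {G ι : Type*} [Group G] [MeasurableSpace G]
    [MeasurableMul G] (μ : Measure G) [μ.IsMulLeftInvariant] [Countable ι] (γ : ι → G)
    {U : Set G} (hU : MeasurableSet U)
    (hdisj : Pairwise fun i j => Disjoint ((γ i * ·) '' U) ((γ j * ·) '' U))
    {φ : G → ℝ≥0∞} (hφ : Measurable φ) {D : ℝ≥0∞}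
    (hD : ∀ i, ∀ g ∈ (γ i * ·) '' U, φ (γ i) ≤ D * φ g) :
    μ U * ∑' i, φ (γ i) ≤ D * ∫⁻ g, φ g ∂μ := by
  have htrans_meas : ∀ i, MeasurableSet ((γ i * ·) '' U) := fun i => by
    rw [image_mul_left]; exact measurable_const_mul _ hU
  have htrans_measure : ∀ i, μ ((γ i * ·) '' U) = μ U := fun i => by
    rw [image_mul_left]; exact measure_preimage_mul μ _ U
  have hsingle : ∀ i, μ U * φ (γ i) ≤ D * ∫⁻ g in (γ i * ·) '' U, φ g ∂μ := fun i => calc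
    μ U * φ (γ i) = ∫⁻ _ in (γ i * ·) '' U, φ (γ i) ∂μ := by
        rw [setLIntegral_const, htrans_measure, mul_comm]
    _ ≤ ∫⁻ g in (γ i * ·) '' U, D * φ g ∂μ :=
        setLIntegral_mono (measurable_const.mul hφ) (hD i)
    _ = D * ∫⁻ g in (γ i * ·) '' U, φ g ∂μ := lintegral_const_mul D hφ
  calc μ U * ∑' i, φ (γ i) = ∑' i, μ U * φ (γ i) := ENNReal.tsum_mul_left.symm
    _ ≤ ∑' i, D * ∫⁻ g in (γ i * ·) '' U, φ g ∂μ := ENNReal.tsum_le_tsum hsingle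
    _ = D * ∫⁻ g in ⋃ i, (γ i * ·) '' U, φ g ∂μ := by
        rw [ENNReal.tsum_mul_left, lintegral_iUnion htrans_meas hdisj]
    _ ≤ D * ∫⁻ g, φ g ∂μ := by gcongr; exact Measure.restrict_le_self

theorem lintegral_mul_lintegral_sqrt_density_le {G X : Type*} [Group G] [MeasurableSpace G]
    [MeasurableMul G] (μG : Measure G) [μG.IsMulLeftInvariant] [SFinite μG]
    [MeasurableSpace X] [MulAction G X] [MeasurableSMul G X] (ν : Measure X) [IsFiniteMeasure ν]
    {c : G → X → ℝ} (hc_meas : Measurable (fun p : G × X => c p.1 p.2))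
    (hc : ∀ g : G, ν.map (g • ·) = ν.withDensity fun x => ENNReal.ofReal (c g x))
    (K : Subgroup G) (hKinv : ∀ k ∈ K, ν.map (k • ·) = ν)
    (herg : ∀ A : Set X, MeasurableSet A →
      (∀ k ∈ K, ν (symmDiff ((fun x => k • x) '' A) A) = 0) → ν A = 0 ∨ ν A = 1)
    {Ξ : G → ℝ} (hΞ : ∀ g : G, Ξ g = ∫ x, √(c g x) ∂ν)
    {f : G → ℝ} (hf_meas : Measurable f) (hf_K : ∀ k ∈ K, ∀ g, f (k * g) = f g)
    {ξ : X → ℝ≥0∞} (hξ_meas : Measurable ξ) :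
    ∫⁻ g, ENNReal.ofReal (f g) * ∫⁻ x, ENNReal.ofReal √(c g x) * ξ x ∂ν ∂μG
      ≤ (∫⁻ g, ENNReal.ofReal (f g * Ξ g) ∂μG) * ∫⁻ x, ξ x ∂ν := by
  set F : G → ℝ≥0∞ := fun g => ENNReal.ofReal (f g)
  set S : G → X → ℝ≥0∞ := fun g x => ENNReal.ofReal √(c g x)
  set h : X → ℝ≥0∞ := fun x => ∫⁻ g, F g * S g x ∂μG
  have hF : Measurable F := hf_meas.ennreal_ofReal
  have hS : Measurable (uncurry S) := hc_meas.sqrt.ennreal_ofReal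
  have hΦ : Measurable (uncurry fun g x => F g * S g x) := (hF.comp measurable_fst).mul hS
  have hh : Measurable h := hΦ.lintegral_prod_left'
  have hcg : ∀ g, Measurable (c g) := fun g => hc_meas.comp measurable_prodMk_left
  have hcocycle : ∀ k ∈ K, ∀ g, ∀ᵐ x ∂ν, F (k * g) * S (k * g) x = F g * S g (k⁻¹ • x) := by
    intro k hk g
    filter_upwards [density_mul_ae_eq_density_comp_inv_smul (fun g => (hcg g).ennreal_ofReal) hc
      (hKinv k hk) g] with x hx
    simp only [F, S, hf_K k hk g, Real.sqrt_eq_sqrt_of_ofReal_eq hx]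
  have hle : ∀ᵐ x ∂ν, h x ≤ ∫⁻ x, h x ∂ν :=
    ae_le_lintegral_of_measure_superlevel_eq_zero_or_one hh.aemeasurable
      (measure_superlevel_eq_zero_or_one K herg hh fun k hk =>
        ae_lintegral_comp_inv_smul_eq μG hΦ (hcocycle k hk))
  have hS_integral : ∀ g, ∫⁻ x, S g x ∂ν = ENNReal.ofReal (Ξ g) := fun g => by
    have hfin : ∫⁻ x, ENNReal.ofReal (c g x) ∂ν ≠ ⊤ := by
      rw [lintegral_eq_measure_univ_of_map_eq_withDensity (measurable_const_smul g) (hc g)]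
      exact measure_ne_top ν univ
    rw [hΞ, ofReal_integral_eq_lintegral_ofReal (integrable_sqrt_of_lintegral_ofReal_ne_top
      (hcg g) hfin) (ae_of_all _ fun x => Real.sqrt_nonneg _)]
  have hmean : ∫⁻ x, h x ∂ν = ∫⁻ g, ENNReal.ofReal (f g * Ξ g) ∂μG := by
    have := lintegral_mul_lintegral_mul_swap (μ := μG) (ν := ν) hF hS measurable_const (ξ := 1)
    simp only [Pi.one_apply, mul_one, hS_integral] at this
    rw [← this]
    refine lintegral_congr fun g => (ENNReal.ofReal_mul' ?_).symm
    rw [hΞ]; exact integral_nonneg fun x => Real.sqrt_nonneg _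
  calc ∫⁻ g, F g * ∫⁻ x, S g x * ξ x ∂ν ∂μG = ∫⁻ x, h x * ξ x ∂ν :=
        lintegral_mul_lintegral_mul_swap hF hS hξ_meas
    _ ≤ ∫⁻ x, (∫⁻ x, h x ∂ν) * ξ x ∂ν := lintegral_mono_ae (hle.mono fun x hx => by gcongr)
    _ = (∫⁻ g, ENNReal.ofReal (f g * Ξ g) ∂μG) * ∫⁻ x, ξ x ∂ν := by
        rw [lintegral_const_mul _ hξ_meas, hmean]

theorem discretized_radial_estimate_general
    {G : Type*} [Group G] [TopologicalSpace G] [IsTopologicalGroup G]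
    [LocallyCompactSpace G] [SecondCountableTopology G]
    [MeasurableSpace G] [BorelSpace G]
    (μG : Measure G) [μG.IsHaarMeasure]
    (K : Subgroup G)
    {X : Type*} [MeasurableSpace X] [MulAction G X]
    (ν : Measure X) [IsProbabilityMeasure ν]
    (hact : Measurable (fun p : G × X => p.1 • p.2))
    (c : G → X → ℝ)
    (hc_meas : Measurable (fun p : G × X => c p.1 p.2))
    (hc : ∀ g : G, Measure.map (fun x : X => g • x) ν
        = ν.withDensity (fun x => ENNReal.ofReal (c g x)))
    (hKinv : ∀ k ∈ K, Measure.map (fun x : X => k • x) ν = ν)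
    (herg : ∀ A : Set X, MeasurableSet A →
      (∀ k ∈ K, ν (symmDiff ((fun x => k • x) '' A) A) = 0) → ν A = 0 ∨ ν A = 1)
    (Ξ : G → ℝ) (hΞ : ∀ g : G, Ξ g = ∫ x, Real.sqrt (c g x) ∂ν)
    (Γ : Subgroup G) (hΓ_count : Countable Γ)
    (f : G → ℝ) (hf_meas : Measurable f)
    (hf_biK : ∀ k ∈ K, ∀ k' ∈ K, ∀ g : G, f (k * g * k') = f g)
    (ξ : X → ℝ≥0∞) (hξ_meas : Measurable ξ)
    (U : Set G) (hU_open : IsOpen U) (hU_mem : (1 : G) ∈ U)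
    (hU_cpt : IsCompact (closure U))
    (hdisj : ∀ γ ∈ Γ, ∀ γ' ∈ Γ, γ ≠ γ' →
      Disjoint ((fun u => γ * u) '' U) ((fun u => γ' * u) '' U))
    (C : ℝ) (hC : 0 < C)
    (hstab_f : ∀ γ ∈ Γ, ∀ g ∈ (fun u => γ * u) '' U, f γ ≤ C * f g)
    (hstab_coeff : ∀ γ ∈ Γ, ∀ g ∈ (fun u => γ * u) '' U,
      ∫⁻ x, ENNReal.ofReal (Real.sqrt (c γ x)) * ξ x ∂ν
        ≤ ENNReal.ofReal C * ∫⁻ x, ENNReal.ofReal (Real.sqrt (c g x)) * ξ x ∂ν) :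
    ∑' γ : Γ, ENNReal.ofReal (f (γ : G))
        * ∫⁻ x, ENNReal.ofReal (Real.sqrt (c (γ : G) x)) * ξ x ∂ν
      ≤ (ENNReal.ofReal (C ^ 2) / μG U)
        * (∫⁻ g, ENNReal.ofReal (f g * Ξ g) ∂μG) * ∫⁻ x, ξ x ∂ν := by
  have : MeasurableSMul₂ G X := ⟨hact⟩
  set φ : G → ℝ≥0∞ := fun g => ENNReal.ofReal (f g) * ∫⁻ x, ENNReal.ofReal √(c g x) * ξ x ∂ν
  have hφ : Measurable φ := hf_meas.ennreal_ofReal.mul <| Measurable.lintegral_prod_right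
    (f := fun g x => ENNReal.ofReal √(c g x) * ξ x) <|
      hc_meas.sqrt.ennreal_ofReal.mul (hξ_meas.comp measurable_snd)
  have hstab : ∀ γ : Γ, ∀ g ∈ ((γ : G) * ·) '' U, φ γ ≤ ENNReal.ofReal (C ^ 2) * φ g := by
    intro γ g hg
    rw [ENNReal.ofReal_pow hC.le]
    refine mul_le_sq_mul_mul_of_le_mul ?_ (hstab_coeff γ γ.2 g hg)
    rw [← ENNReal.ofReal_mul hC.le]
    exact ENNReal.ofReal_le_ofReal (hstab_f γ γ.2 g hg)
  have hpack := measure_mul_tsum_le_lintegral μG (fun γ : Γ => (γ : G)) hU_open.measurableSet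
    (fun γ γ' hne => hdisj γ γ.2 γ' γ'.2 (Subtype.coe_injective.ne hne)) hφ hstab
  have hradial := lintegral_mul_lintegral_sqrt_density_le μG ν hc_meas hc K hKinv herg hΞ
    hf_meas (fun k hk g => by simpa using hf_biK k hk 1 K.one_mem g) hξ_meas
  have hU_pos : μG U ≠ 0 := (hU_open.measure_pos μG ⟨1, hU_mem⟩).ne'
  have hU_fin : μG U ≠ ⊤ := ((measure_mono subset_closure).trans_lt hU_cpt.measure_lt_top).ne
  calc ∑' γ : Γ, φ γ
      ≤ ENNReal.ofReal (C ^ 2)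
          * ((∫⁻ g, ENNReal.ofReal (f g * Ξ g) ∂μG) * ∫⁻ x, ξ x ∂ν) / μG U := by
        rw [ENNReal.le_div_iff_mul_le (.inl hU_pos) (.inl hU_fin), mul_comm]
        exact hpack.trans (mul_le_mul_right hradial _)
    _ = _ := by rw [ENNReal.div_eq_inv_mul, ENNReal.div_eq_inv_mul]; ring

/-- Abstract form of Proposition 3.3: for a countable discrete subgroup `Γ ⊆ G`,
a nonnegative measurable bi-`K`-invariant `f` with `∫_G f Ξ dμ_G < ∞` which is stable
relative to `Γ` (together with the matrix coefficients `g ↦ ∫ c(g,x)^{1/2} ξ dν`),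
with constant `C` and disjointness neighborhood `U`, one has
`Σ_{γ∈Γ} f(γ) ∫_X c(γ,x)^{1/2} ξ dν ≤ (C²/μ_G(U)) (∫_G f Ξ dμ_G) (∫_X ξ dν)`. -/
theorem discretized_radial_estimate
    {G : Type*} [Group G] [TopologicalSpace G] [IsTopologicalGroup G]
    [LocallyCompactSpace G] [SecondCountableTopology G]
    [MeasurableSpace G] [BorelSpace G]
    (μG : Measure G) [μG.IsHaarMeasure]
    (K : Subgroup G) (hK : IsCompact (K : Set G))
    {X : Type*} [MeasurableSpace X] [MulAction G X]
    (ν : Measure X) [IsProbabilityMeasure ν]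
    (hact : Measurable (fun p : G × X => p.1 • p.2))
    (c : G → X → ℝ)
    (hc_meas : Measurable (fun p : G × X => c p.1 p.2))
    (hc_pos : ∀ g : G, ∀ᵐ x ∂ν, 0 < c g x)
    (hc : ∀ g : G, Measure.map (fun x : X => g • x) ν
        = ν.withDensity (fun x => ENNReal.ofReal (c g x)))
    (hKinv : ∀ k ∈ K, Measure.map (fun x : X => k • x) ν = ν)
    (herg : ∀ A : Set X, MeasurableSet A →
      (∀ k ∈ K, ν (symmDiff ((fun x => k • x) '' A) A) = 0) → ν A = 0 ∨ ν A = 1)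
    (Ξ : G → ℝ) (hΞ : ∀ g : G, Ξ g = ∫ x, Real.sqrt (c g x) ∂ν)
    (Γ : Subgroup G) (hΓ_count : Countable Γ) (hΓ_disc : DiscreteTopology Γ)
    (f : G → ℝ) (hf_meas : Measurable f) (hf_nonneg : ∀ g, 0 ≤ f g)
    (hf_biK : ∀ k ∈ K, ∀ k' ∈ K, ∀ g : G, f (k * g * k') = f g)
    (hfΞ : ∫⁻ g, ENNReal.ofReal (f g * Ξ g) ∂μG < ⊤)
    (ξ : X → ℝ≥0∞) (hξ_meas : Measurable ξ) (hξ_fin : ∫⁻ x, ξ x ∂ν < ⊤)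
    (U : Set G) (hU_open : IsOpen U) (hU_mem : (1 : G) ∈ U)
    (hU_cpt : IsCompact (closure U))
    (hdisj : ∀ γ ∈ Γ, ∀ γ' ∈ Γ, γ ≠ γ' →
      Disjoint ((fun u => γ * u) '' U) ((fun u => γ' * u) '' U))
    (C : ℝ) (hC : 0 < C)
    (hstab_f : ∀ γ ∈ Γ, ∀ g ∈ (fun u => γ * u) '' U, f γ ≤ C * f g)
    (hstab_coeff : ∀ γ ∈ Γ, ∀ g ∈ (fun u => γ * u) '' U,
      ∫⁻ x, ENNReal.ofReal (Real.sqrt (c γ x)) * ξ x ∂ν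
        ≤ ENNReal.ofReal C * ∫⁻ x, ENNReal.ofReal (Real.sqrt (c g x)) * ξ x ∂ν) :
    ∑' γ : Γ, ENNReal.ofReal (f (γ : G))
        * ∫⁻ x, ENNReal.ofReal (Real.sqrt (c (γ : G) x)) * ξ x ∂ν
      ≤ (ENNReal.ofReal (C ^ 2) / μG U)
        * (∫⁻ g, ENNReal.ofReal (f g * Ξ g) ∂μG) * ∫⁻ x, ξ x ∂ν :=
  discretized_radial_estimate_general μG K ν hact c hc_meas hc hKinv herg Ξ hΞ Γ hΓ_count f hf_meas
    hf_biK ξ hξ_meas U hU_open hU_mem hU_cpt hdisj C hC hstab_f hstab_coeff
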